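/- arXiv:2102.11939 — 8 statements merged into one kernel-verified Lean document; each statement's English description precedes it below -/
import Mathlib

section
/- Let V be a real vector space and N : V → ℝ a convex functional. Let G, Ġ : V → V satisfy, for some constants Δt_FE > 0 and k̇ > 0: (forward Euler condition) N(u + h·G(u)) ≤ N(u) for all u ∈ V and all 0 ≤ h ≤ Δt_FE; and (backward derivative condition) N(u − h²·Ġ(u)) ≤ N(u) for all u ∈ V and all h ≥ 0 with h² ≤ k̇·Δt_FE². Consider an s-stage implicit two-derivative Runge–Kutta method in Shu–Osher form: stages u⁽¹⁾,…,u⁽ˢ⁾ ∈ V satisfy u⁽ⁱ⁾ = rᵢ·uⁿ + Σ_{j<i} p_{ij}·u⁽ʲ⁾ + Δt·d_{ii}·G(u⁽ⁱ⁾) + Δt²·ḋ_{ii}·Ġ(u⁽ⁱ⁾) for i = 1,…,s, where rᵢ = 1 − Σ_{j<i} p_{ij}, and u^{n+1} = u⁽ˢ⁾. If all coefficients satisfy rᵢ ≥ 0, p_{ij} ≥ 0, d_{ii} ≥ 0 and ḋ_{ii} ≤ 0, then for every time step Δt > 0 the method preserves the strong stability property: N(u^{n+1}) ≤ N(uⁿ).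 -/
/-!
Each stage is an implicit step `u = v + a • G u + b • (-Ġ u)` with `a, b ≥ 0`. By convexity the
forward Euler and backward derivative conditions combine: `N` does not increase from `u` along
`a • G u + b • (-Ġ u)` for some small positive step `t`. Since `u` is a convex combination of
`v = u - (a • G u + b • (-Ġ u))` and `u + t • (a • G u + b • (-Ġ u))`, this forces `N u ≤ N v`,
whatever the size of the step. As `v` is a convex combination of `uⁿ` and the earlier stages,
induction over the stages gives `N (u⁽ⁱ⁾) ≤ N uⁿ` for every stage.
-/

section

variable {V : Type*} [AddCommGroup V] [Module ℝ V] {N : V → ℝ}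

theorem convexOn_univ_of_map_combo_le
    (hN : ∀ x y : V, ∀ θ : ℝ, 0 ≤ θ → θ ≤ 1 →
      N (θ • x + (1 - θ) • y) ≤ θ * N x + (1 - θ) * N y) :
    ConvexOn ℝ Set.univ N := by
  refine ⟨convex_univ, fun x _ y _ a b ha hb hab => ?_⟩
  obtain rfl : b = 1 - a := by linarith
  exact hN x y a ha (by linarith)

theorem Convex.smul_add_smul_add_smul_mem {s : Set V} (hs : Convex ℝ s) {x y z : V}
    (hx : x ∈ s) (hy : y ∈ s) (hz : z ∈ s) {a b c : ℝ} (ha : 0 ≤ a) (hb : 0 ≤ b) (hc : 0 ≤ c)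
    (habc : a + b + c = 1) : a • x + b • y + c • z ∈ s := by
  simpa [Fin.sum_univ_three, add_assoc] using
    hs.sum_mem (t := Finset.univ) (w := ![a, b, c]) (z := ![x, y, z])
      (by simp [Fin.forall_fin_succ, ha, hb, hc]) (by simp [Fin.sum_univ_three, habc])
      (by simp [Fin.forall_fin_succ, hx, hy, hz])

theorem ConvexOn.map_le_map_sub_of_map_add_smul_le (hN : ConvexOn ℝ Set.univ N) {u d : V}
    {t : ℝ} (ht : 0 < t) (h : N (u + t • d) ≤ N u) : N u ≤ N (u - d) := by
  have hu : (t / (1 + t)) • (u - d) + (1 / (1 + t)) • (u + t • d) = u := by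
    match_scalars <;> field_simp <;> ring
  have hconv : N u ≤ t / (1 + t) * N (u - d) + 1 / (1 + t) * N (u + t • d) := by
    simpa only [hu, smul_eq_mul] using hN.2 (Set.mem_univ (u - d)) (Set.mem_univ (u + t • d))
      (by positivity : 0 ≤ t / (1 + t)) (by positivity : 0 ≤ 1 / (1 + t)) (by field_simp; ring)
  have hsplit : t / (1 + t) * N u + 1 / (1 + t) * N u = N u := by field_simp; ring
  have hscaled : t / (1 + t) * N u ≤ t / (1 + t) * N (u - d) := by
    linarith [mul_le_mul_of_nonneg_left h (by positivity : (0 : ℝ) ≤ 1 / (1 + t))]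
  exact le_of_mul_le_mul_left hscaled (by positivity)

theorem ConvexOn.exists_pos_map_add_smul_add_smul_le (hN : ConvexOn ℝ Set.univ N)
    {u g₁ g₂ : V} {τ₁ τ₂ a b : ℝ} (hτ₁ : 0 < τ₁) (hτ₂ : 0 < τ₂) (ha : 0 ≤ a) (hb : 0 ≤ b)
    (h₁ : N (u + τ₁ • g₁) ≤ N u) (h₂ : N (u + τ₂ • g₂) ≤ N u) :
    ∃ t : ℝ, 0 < t ∧ N (u + t • (a • g₁ + b • g₂)) ≤ N u := by
  -- `t` makes the weights `t`, `t a / τ₁`, `t b / τ₂` of `u`, `u + τ₁ g₁`, `u + τ₂ g₂` sum to one.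
  obtain ⟨t, ht, hone⟩ : ∃ t : ℝ, 0 < t ∧ t + t * a / τ₁ + t * b / τ₂ = 1 :=
    ⟨(1 + a / τ₁ + b / τ₂)⁻¹, by positivity, by field_simp⟩
  have hcomb : t • u + (t * a / τ₁) • (u + τ₁ • g₁) + (t * b / τ₂) • (u + τ₂ • g₂)
      = u + t • (a • g₁ + b • g₂) := by
    match_scalars
    · linear_combination hone
    all_goals field_simp
  refine ⟨t, ht, ?_⟩
  rw [← hcomb]
  exact ((hN.convex_le (N u)).smul_add_smul_add_smul_mem ⟨Set.mem_univ u, le_rfl⟩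
    ⟨Set.mem_univ _, h₁⟩ ⟨Set.mem_univ _, h₂⟩ ht.le (by positivity) (by positivity) hone).2

theorem ConvexOn.map_le_of_eq_add_smul_add_smul (hN : ConvexOn ℝ Set.univ N)
    {u v g₁ g₂ : V} {τ₁ τ₂ a b : ℝ} (hτ₁ : 0 < τ₁) (hτ₂ : 0 < τ₂) (ha : 0 ≤ a) (hb : 0 ≤ b)
    (h₁ : N (u + τ₁ • g₁) ≤ N u) (h₂ : N (u + τ₂ • g₂) ≤ N u)
    (hu : u = v + a • g₁ + b • g₂) : N u ≤ N v := by
  obtain ⟨t, ht, hdescent⟩ := hN.exists_pos_map_add_smul_add_smul_le hτ₁ hτ₂ ha hb h₁ h₂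
  have hv : v = u - (a • g₁ + b • g₂) := by rw [hu]; abel
  rw [hv]
  exact hN.map_le_map_sub_of_map_add_smul_le ht hdescent

theorem ConvexOn.map_le_of_map_le_add_sum {n : ℕ} (hN : ConvexOn ℝ Set.univ N) {x : V}
    {u : Fin n → V} {r : Fin n → ℝ} {p : Fin n → Fin n → ℝ} (hr : ∀ i, 0 ≤ r i)
    (hp : ∀ i j, j < i → 0 ≤ p i j)
    (hsum : ∀ i, r i + ∑ j ∈ Finset.univ.filter (fun j => j < i), p i j = 1)
    (hstage : ∀ i, N (u i) ≤ N (r i • x + ∑ j ∈ Finset.univ.filter (fun j => j < i), p i j • u j))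
    (i : Fin n) : N (u i) ≤ N x := by
  induction i using Fin.strong_induction_on with
  | h i ih =>
    have hp' : ∀ j ∈ Finset.univ.filter (fun j => j < i), 0 ≤ p i j := fun j hj =>
      hp i j (Finset.mem_filter.1 hj).2
    calc N (u i) ≤ N (r i • x + ∑ j ∈ Finset.univ.filter (fun j => j < i), p i j • u j) :=
          hstage i
      _ ≤ r i • N x + ∑ j ∈ Finset.univ.filter (fun j => j < i), p i j • N (u j) :=
          hN.map_add_sum_le hp' (hsum i) (fun _ _ => Set.mem_univ _) (hr i) (Set.mem_univ x)
      _ ≤ r i • N x + ∑ j ∈ Finset.univ.filter (fun j => j < i), p i j • N x := by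
          gcongr with j hj
          · exact hp' j hj
          · exact ih j (Finset.mem_filter.1 hj).2
      _ = N x := by rw [← Finset.sum_smul, ← add_smul, hsum i, one_smul]

end

/-- An implicit two-derivative Runge--Kutta method in Shu--Osher form with
nonnegative coefficients `rᵢ, p_{ij}, d_{ii}` and nonpositive `ḋ_{ii}` is unconditionally SSP,
given the forward Euler condition on `G` and the backward derivative condition on `Ġ`. -/
theorem unconditional_SSP_implicit_two_derivative_RK
    {V : Type*} [AddCommGroup V] [Module ℝ V]
    (N : V → ℝ)
    (hN : ∀ x y : V, ∀ θ : ℝ, 0 ≤ θ → θ ≤ 1 →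
      N (θ • x + (1 - θ) • y) ≤ θ * N x + (1 - θ) * N y)
    (G Gdot : V → V) (ΔtFE kdot : ℝ) (hΔtFE : 0 < ΔtFE) (hkdot : 0 < kdot)
    (hFE : ∀ u : V, ∀ h : ℝ, 0 ≤ h → h ≤ ΔtFE → N (u + h • G u) ≤ N u)
    (hBD : ∀ u : V, ∀ h : ℝ, 0 ≤ h → h ^ 2 ≤ kdot * ΔtFE ^ 2 →
      N (u - (h ^ 2) • Gdot u) ≤ N u)
    (s : ℕ) (p : Fin (s + 1) → Fin (s + 1) → ℝ)
    (d ddot r : Fin (s + 1) → ℝ)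
    (hr : ∀ i, r i = 1 - ∑ j ∈ Finset.univ.filter (fun j => j < i), p i j)
    (hrnonneg : ∀ i, 0 ≤ r i) (hp : ∀ i j, 0 ≤ p i j)
    (hd : ∀ i, 0 ≤ d i) (hddot : ∀ i, ddot i ≤ 0)
    (Δt : ℝ) (hΔt : 0 < Δt)
    (un : V) (u : Fin (s + 1) → V)
    (hstage : ∀ i, u i = r i • un
      + (∑ j ∈ Finset.univ.filter (fun j => j < i), p i j • u j)
      + (Δt * d i) • G (u i) + (Δt ^ 2 * ddot i) • Gdot (u i)) :
    N (u (Fin.last s)) ≤ N un := by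
  have hconv := convexOn_univ_of_map_combo_le hN
  have hEuler : ∀ x, N (x + ΔtFE • G x) ≤ N x := fun x => hFE x ΔtFE hΔtFE.le le_rfl
  have hBackward : ∀ x, N (x + (kdot * ΔtFE ^ 2) • -Gdot x) ≤ N x := fun x => by
    have hsq : (√kdot * ΔtFE) ^ 2 = kdot * ΔtFE ^ 2 := by rw [mul_pow, Real.sq_sqrt hkdot.le]
    simpa only [hsq, smul_neg, ← sub_eq_add_neg] using hBD x _ (by positivity) hsq.le
  refine hconv.map_le_of_map_le_add_sum hrnonneg (fun i j _ => hp i j)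
    (fun i => by rw [hr i]; ring) (fun i => ?_) _
  refine hconv.map_le_of_eq_add_smul_add_smul (τ₂ := kdot * ΔtFE ^ 2) (b := -(Δt ^ 2 * ddot i))
    hΔtFE (by positivity) (mul_nonneg hΔt.le (hd i))
    (neg_nonneg.2 (mul_nonpos_of_nonneg_of_nonpos (sq_nonneg Δt) (hddot i)))
    (hEuler _) (hBackward _) ?_
  conv_lhs => rw [hstage i]
  rw [neg_smul_neg]
end

section
/- Let V be a real vector space and N : V → ℝ a convex functional. Let G : V → V satisfy the forward Euler condition with constant Δt_FE > 0, and Ġ : V → V satisfy the backward derivative condition with constants Δt_FE and k̇ > 0. Let d ≥ 0 and ḋ ≤ 0 be real numbers, Δt > 0, and suppose u, v ∈ V satisfy the implicit stage relation v = u + Δt·d·G(v) + Δt²·ḋ·Ġ(v). Then N(v) ≤ N(u), with no restriction on the size of Δt. -/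
/-!
Write `x = Δt d G(v) + Δt² ḋ Ġ(v)`, so that `v = u + x`. For every small `r > 0` the explicit
step `v + r x` is the midpoint of a forward Euler step `v + 2 r Δt d G(v)` and a backward
derivative step `v + 2 r Δt² ḋ Ġ(v)` from `v`, hence `N (v + r x) ≤ N v`. Since `v` is a convex
combination of `u` and `v + r x` with positive weight on `u`, convexity then forces `N v ≤ N u`.
-/

open Set Filter Topology

theorem exists_pos_mul_lt_and_mul_lt (A B : ℝ) {C D : ℝ} (hC : 0 < C) (hD : 0 < D) :
    ∃ r > 0, r * A < C ∧ r * B < D := by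
  have hA : ∀ᶠ r in 𝓝 (0 : ℝ), r * A < C :=
    (continuous_id.mul continuous_const).continuousAt.eventually_lt continuousAt_const
      (by simpa using hC)
  have hB : ∀ᶠ r in 𝓝 (0 : ℝ), r * B < D :=
    (continuous_id.mul continuous_const).continuousAt.eventually_lt continuousAt_const
      (by simpa using hD)
  exact ((eventually_mem_nhdsWithin (s := Ioi 0)).and
    ((hA.and hB).filter_mono nhdsWithin_le_nhds)).exists

section

variable {V : Type*} [AddCommGroup V] [Module ℝ V] {N : V → ℝ}

theorem convexOn_univ_of_forall_le
    (hN : ∀ x y : V, ∀ θ : ℝ, 0 ≤ θ → θ ≤ 1 →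
      N (θ • x + (1 - θ) • y) ≤ θ * N x + (1 - θ) * N y) :
    ConvexOn ℝ univ N := by
  refine ⟨convex_univ, fun x _ y _ a b ha hb hab => ?_⟩
  obtain rfl : b = 1 - a := by linarith
  exact hN x y a ha (by linarith)

theorem ConvexOn.add_midpoint_le (hN : ConvexOn ℝ univ N) {v p q : V}
    (hp : N (v + p) ≤ N v) (hq : N (v + q) ≤ N v) :
    N (v + (2⁻¹ : ℝ) • (p + q)) ≤ N v := by
  have hmid : v + (2⁻¹ : ℝ) • (p + q) = (2⁻¹ : ℝ) • (v + p) + (2⁻¹ : ℝ) • (v + q) := by module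
  have := hN.2 (mem_univ (v + p)) (mem_univ (v + q))
    (show (0 : ℝ) ≤ 2⁻¹ by norm_num) (show (0 : ℝ) ≤ 2⁻¹ by norm_num) (by norm_num)
  simp only [smul_eq_mul] at this
  rw [hmid]
  linarith

theorem ConvexOn.le_of_eq_add_of_add_smul_le (hN : ConvexOn ℝ univ N) {u v x : V} {r : ℝ}
    (hv : v = u + x) (hr : 0 < r) (hstep : N (v + r • x) ≤ N v) : N v ≤ N u := by
  have hcomb : v = (r / (1 + r)) • u + (1 / (1 + r)) • (v + r • x) := by
    subst hv
    match_scalars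
    · field_simp; ring
    · field_simp
  have hsum : r / (1 + r) + 1 / (1 + r) = 1 := by field_simp; ring
  rw [hcomb]
  exact hN.le_left_of_right_le' (mem_univ u) (mem_univ _) (by positivity) (by positivity) hsum
    (by rwa [← hcomb])

theorem add_smul_le_of_backward_derivative {v y : V} {K : ℝ}
    (hBD : ∀ h : ℝ, 0 ≤ h → h ^ 2 ≤ K → N (v - h ^ 2 • y) ≤ N v)
    {c : ℝ} (hc : c ≤ 0) (hcK : -c ≤ K) : N (v + c • y) ≤ N v := by
  have hsq : √(-c) ^ 2 = -c := Real.sq_sqrt (by linarith)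
  have hBDc := hBD √(-c) (Real.sqrt_nonneg _) (by rw [hsq]; exact hcK)
  rwa [hsq, neg_smul, sub_neg_eq_add] at hBDc

end

/-- A single implicit stage `v = u + Δt·d·G(v) + Δt²·ḋ·Ġ(v)` with `d ≥ 0`,
`ḋ ≤ 0` satisfies `N(v) ≤ N(u)` for any `Δt > 0`, given the forward Euler condition on `G`
and the backward derivative condition on `Ġ`. -/
theorem implicit_stage_unconditionally_SSP
    {V : Type*} [AddCommGroup V] [Module ℝ V]
    (N : V → ℝ)
    (hN : ∀ x y : V, ∀ θ : ℝ, 0 ≤ θ → θ ≤ 1 →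
      N (θ • x + (1 - θ) • y) ≤ θ * N x + (1 - θ) * N y)
    (G Gdot : V → V) (ΔtFE kdot : ℝ) (hΔtFE : 0 < ΔtFE) (hkdot : 0 < kdot)
    (hFE : ∀ u : V, ∀ h : ℝ, 0 ≤ h → h ≤ ΔtFE → N (u + h • G u) ≤ N u)
    (hBD : ∀ u : V, ∀ h : ℝ, 0 ≤ h → h ^ 2 ≤ kdot * ΔtFE ^ 2 →
      N (u - (h ^ 2) • Gdot u) ≤ N u)
    (d ddot : ℝ) (hd : 0 ≤ d) (hddot : ddot ≤ 0)
    (Δt : ℝ) (hΔt : 0 < Δt)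
    (u v : V)
    (hstage : v = u + (Δt * d) • G v + (Δt ^ 2 * ddot) • Gdot v) :
    N v ≤ N u := by
  set a := Δt * d
  set b := Δt ^ 2 * ddot
  have ha : 0 ≤ a := mul_nonneg hΔt.le hd
  have hb : b ≤ 0 := mul_nonpos_of_nonneg_of_nonpos (sq_nonneg Δt) hddot
  have hconv := convexOn_univ_of_forall_le hN
  obtain ⟨r, hr, hra, hrb⟩ :=
    exists_pos_mul_lt_and_mul_lt (2 * a) (-(2 * b)) hΔtFE (by positivity : 0 < kdot * ΔtFE ^ 2)
  have hG : N (v + (r * (2 * a)) • G v) ≤ N v := hFE v _ (by positivity) hra.le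
  have hGdot : N (v + (r * (2 * b)) • Gdot v) ≤ N v :=
    add_smul_le_of_backward_derivative (hBD v) (by nlinarith) (by linarith)
  have hstep : v + r • (a • G v + b • Gdot v)
      = v + (2⁻¹ : ℝ) • ((r * (2 * a)) • G v + (r * (2 * b)) • Gdot v) := by module
  refine hconv.le_of_eq_add_of_add_smul_le (hstage.trans (add_assoc _ _ _)) hr ?_
  rw [hstep]
  exact hconv.add_midpoint_le hG hGdot
end

section
/- Let V be a real vector space and N : V → ℝ a convex functional. Let F : V → V satisfy the forward Euler condition with constant Δt_FE > 0. Let r > 0, let r₀, p₁,…,p_m, w₁,…,w_m be nonnegative real numbers with r₀ + Σⱼ pⱼ + Σⱼ wⱼ = 1, let uⁿ ∈ V, and let u₁,…,u_m ∈ V satisfy N(uⱼ) ≤ N(uⁿ) for all j. Then for every 0 < Δt ≤ r·Δt_FE, the explicitly computed vector u_e = r₀·uⁿ + Σⱼ pⱼ·uⱼ + Σⱼ wⱼ·(uⱼ + (Δt/r)·F(uⱼ)) satisfies N(u_e) ≤ N(uⁿ). -/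
open Finset

/-! The sublevel set `{x | N x ≤ N uⁿ}` of the convex functional `N` is convex. It contains `uⁿ`,
every `uⱼ`, and, by the forward Euler condition with step `Δt / r ≤ Δt_FE`, every
`uⱼ + (Δt / r) • F uⱼ`; hence it contains their convex combination `u_e`. -/

theorem convexOn_univ_of_forall_le_s2 {𝕜 E β : Type*} [Ring 𝕜] [PartialOrder 𝕜] [IsOrderedAddMonoid 𝕜]
    [AddCommGroup E] [Module 𝕜 E] [AddCommGroup β] [PartialOrder β] [Module 𝕜 β] {f : E → β}
    (hf : ∀ x y : E, ∀ θ : 𝕜, 0 ≤ θ → θ ≤ 1 → f (θ • x + (1 - θ) • y) ≤ θ • f x + (1 - θ) • f y) :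
    ConvexOn 𝕜 Set.univ f := by
  refine ⟨convex_univ, fun x _ y _ a b ha hb hab => ?_⟩
  obtain rfl : b = 1 - a := eq_sub_of_add_eq' hab
  exact hf x y a ha (sub_nonneg.mp hb)

theorem Convex.smul_add_sum_add_sum_mem {𝕜 E ι κ : Type*} [Field 𝕜] [LinearOrder 𝕜]
    [IsStrictOrderedRing 𝕜] [AddCommGroup E] [Module 𝕜 E] [Fintype ι] [Fintype κ] {s : Set E}
    (hs : Convex 𝕜 s) {a₀ : 𝕜} {a : ι → 𝕜} {b : κ → 𝕜} (ha₀ : 0 ≤ a₀) (ha : ∀ i, 0 ≤ a i)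
    (hb : ∀ k, 0 ≤ b k) (hsum : a₀ + ∑ i, a i + ∑ k, b k = 1) {x₀ : E} {x : ι → E} {y : κ → E}
    (hx₀ : x₀ ∈ s) (hx : ∀ i, x i ∈ s) (hy : ∀ k, y k ∈ s) :
    a₀ • x₀ + ∑ i, a i • x i + ∑ k, b k • y k ∈ s := by
  let c : Option (ι ⊕ κ) → 𝕜 := fun o => o.elim a₀ (Sum.elim a b)
  let z : Option (ι ⊕ κ) → E := fun o => o.elim x₀ (Sum.elim x y)
  have hmem := hs.sum_mem (t := univ) (w := c) (z := z)
    (by rintro (_ | i | k) - <;> simp [c, ha₀, ha, hb])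
    (by simpa [c, Fintype.sum_option, Fintype.sum_sum_type, add_assoc] using hsum)
    (by rintro (_ | i | k) - <;> simp [z, hx₀, hx, hy])
  simpa [c, z, Fintype.sum_option, Fintype.sum_sum_type, add_assoc] using hmem

theorem explicit_convex_combination_SSP_general
    {V : Type*} [AddCommGroup V] [Module ℝ V]
    (N : V → ℝ)
    (hN : ∀ x y : V, ∀ θ : ℝ, 0 ≤ θ → θ ≤ 1 →
      N (θ • x + (1 - θ) • y) ≤ θ * N x + (1 - θ) * N y)
    (F : V → V) (ΔtFE : ℝ)
    (hFE : ∀ u : V, ∀ h : ℝ, 0 ≤ h → h ≤ ΔtFE → N (u + h • F u) ≤ N u)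
    (r : ℝ) (hr : 0 < r)
    (m : ℕ) (r0 : ℝ) (p w : Fin m → ℝ)
    (hr0 : 0 ≤ r0) (hp : ∀ j, 0 ≤ p j) (hw : ∀ j, 0 ≤ w j)
    (hsum : r0 + (∑ j, p j) + (∑ j, w j) = 1)
    (un : V) (u : Fin m → V) (hu : ∀ j, N (u j) ≤ N un)
    (Δt : ℝ) (hΔt1 : 0 < Δt) (hΔt2 : Δt ≤ r * ΔtFE) :
    N (r0 • un + (∑ j, p j • u j) + (∑ j, w j • (u j + (Δt / r) • F (u j)))) ≤ N un := by
  have hsub : Convex ℝ {x | x ∈ Set.univ ∧ N x ≤ N un} :=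
    (convexOn_univ_of_forall_le_s2 hN).convex_le (N un)
  have hstep : Δt / r ≤ ΔtFE := (div_le_iff₀' hr).mpr hΔt2
  have heuler : ∀ j, N (u j + (Δt / r) • F (u j)) ≤ N un := fun j =>
    (hFE (u j) _ (div_pos hΔt1 hr).le hstep).trans (hu j)
  exact (hsub.smul_add_sum_add_sum_mem hr0 hp hw hsum ⟨trivial, le_rfl⟩
    (fun j => ⟨trivial, hu j⟩) (fun j => ⟨trivial, heuler j⟩)).2

/-- The explicitly computed convex combination
`u_e = r₀·uⁿ + Σⱼ pⱼ·uⱼ + Σⱼ wⱼ·(uⱼ + (Δt/r)·F(uⱼ))` satisfies `N(u_e) ≤ N(uⁿ)`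
whenever `0 < Δt ≤ r·Δt_FE`, the coefficients are nonnegative and sum to one, and
`N(uⱼ) ≤ N(uⁿ)` for all `j`. -/
theorem explicit_convex_combination_SSP
    {V : Type*} [AddCommGroup V] [Module ℝ V]
    (N : V → ℝ)
    (hN : ∀ x y : V, ∀ θ : ℝ, 0 ≤ θ → θ ≤ 1 →
      N (θ • x + (1 - θ) • y) ≤ θ * N x + (1 - θ) * N y)
    (F : V → V) (ΔtFE : ℝ) (hΔtFE : 0 < ΔtFE)
    (hFE : ∀ u : V, ∀ h : ℝ, 0 ≤ h → h ≤ ΔtFE → N (u + h • F u) ≤ N u)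
    (r : ℝ) (hr : 0 < r)
    (m : ℕ) (r0 : ℝ) (p w : Fin m → ℝ)
    (hr0 : 0 ≤ r0) (hp : ∀ j, 0 ≤ p j) (hw : ∀ j, 0 ≤ w j)
    (hsum : r0 + (∑ j, p j) + (∑ j, w j) = 1)
    (un : V) (u : Fin m → V) (hu : ∀ j, N (u j) ≤ N un)
    (Δt : ℝ) (hΔt1 : 0 < Δt) (hΔt2 : Δt ≤ r * ΔtFE) :
    N (r0 • un + (∑ j, p j • u j) + (∑ j, w j • (u j + (Δt / r) • F (u j)))) ≤ N un :=
  explicit_convex_combination_SSP_general N hN F ΔtFE hFE r hr m r0 p w hr0 hp hw hsum un u hu Δt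
    hΔt1 hΔt2
end

section
/- Let V be a real vector space and N : V → ℝ a convex functional. Let F : V → V satisfy the forward Euler condition with constant Δt_FE > 0; let G : V → V satisfy the forward Euler condition with constant k·Δt_FE for some k > 0; and let Ġ : V → V satisfy the backward derivative condition with constants Δt_FE and k̇ > 0. Consider an s-stage multi-derivative IMEX Runge–Kutta method in Shu–Osher form with parameter r > 0: stages u⁽¹⁾,…,u⁽ˢ⁾ ∈ V satisfy u⁽ⁱ⁾ = rᵢ·uⁿ + Σ_{j<i} p_{ij}·u⁽ʲ⁾ + Σ_{j<i} w_{ij}·(u⁽ʲ⁾ + (Δt/r)·F(u⁽ʲ⁾)) + Δt·d_{ii}·G(u⁽ⁱ⁾) + Δt²·ḋ_{ii}·Ġ(u⁽ⁱ⁾) for i = 1,…,s, where rᵢ = 1 − Σ_{j<i}(p_{ij} + w_{ij}), and u^{n+1} = u⁽ˢ⁾. If all coefficients satisfy rᵢ ≥ 0, p_{ij} ≥ 0, w_{ij} ≥ 0, d_{ii} ≥ 0 and ḋ_{ii} ≤ 0, then for every time step 0 < Δt ≤ r·Δt_FE the method preserves the strong stability property: N(u^{n+1}) ≤ N(uⁿ).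 -/
/-!
By induction over the stages, `N u⁽ʲ⁾ ≤ N uⁿ` for `j < i`. The explicit part
`rᵢ uⁿ + Σ p_{ij} u⁽ʲ⁾ + Σ w_{ij} (u⁽ʲ⁾ + (Δt/r) F u⁽ʲ⁾)` of stage `i` is then a convex combination of
points of the convex sublevel set `{N ≤ N uⁿ}` (using the forward Euler condition for `F`), hence
lies in it. The implicit part is handled by writing the stage value itself as a convex
combination of a forward Euler step for `G`, a backward derivative step for `Ġ` and the explicit
part, which gives `N u⁽ⁱ⁾ ≤ N(explicit part)` with no restriction on `Δt`.
-/

open Finset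

section

variable {E : Type*} [AddCommGroup E] [Module ℝ E]

theorem convexOn_univ_of_forall {N : E → ℝ}
    (hN : ∀ x y : E, ∀ θ : ℝ, 0 ≤ θ → θ ≤ 1 →
      N (θ • x + (1 - θ) • y) ≤ θ * N x + (1 - θ) * N y) :
    ConvexOn ℝ Set.univ N := by
  refine ⟨convex_univ, fun x _ y _ a b ha _ hab => ?_⟩
  obtain rfl : b = 1 - a := by linarith
  exact hN x y a ha (by linarith)

theorem Convex.smul_add_sum_smul_add_sum_smul_mem {ι : Type*} {s : Set E} (hs : Convex ℝ s)
    {t : Finset ι} {a : ℝ} {b c : ι → ℝ} {x : E} {y z : ι → E}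
    (ha : 0 ≤ a) (hb : ∀ j ∈ t, 0 ≤ b j) (hc : ∀ j ∈ t, 0 ≤ c j)
    (habc : a + ∑ j ∈ t, (b j + c j) = 1)
    (hx : x ∈ s) (hy : ∀ j ∈ t, y j ∈ s) (hz : ∀ j ∈ t, z j ∈ s) :
    a • x + ∑ j ∈ t, b j • y j + ∑ j ∈ t, c j • z j ∈ s := by
  have h := hs.sum_mem (t := insertNone (t.disjSum t)) (w := fun o => o.elim a (Sum.elim b c))
    (z := fun o => o.elim x (Sum.elim y z)) ?_ ?_ ?_
  · simpa [sum_disjSum, add_assoc] using h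
  · rintro (_ | j | j) hj <;> simp_all
  · simpa [sum_disjSum, sum_add_distrib, add_assoc] using habc
  · rintro (_ | j | j) hj <;> simp_all

theorem ConvexOn.le_of_eq_add_smul_add_smul {N : E → ℝ} (hN : ConvexOn ℝ Set.univ N)
    {x y g g' : E} {a b c m : ℝ} (hc : 0 < c) (hm : 0 < m) (ha : 0 ≤ a) (hb : b ≤ 0)
    (hg : N (x + c • g) ≤ N x) (hg' : N (x - m • g') ≤ N x) (hx : x = y + a • g + b • g') :
    N x ≤ N y := by
  -- `D • x = a m (x + c g) - b c (x - m g') + c m y`, a combination with nonnegative weights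
  set D := c * m + a * m - b * c
  have hD : 0 < D := by
    nlinarith [mul_pos hc hm, mul_nonneg ha hm.le, mul_nonpos_of_nonpos_of_nonneg hb hc.le]
  set θ := ![a * m / D, -b * c / D, c * m / D]
  set P := ![x + c • g, x - m • g', y]
  have hθ : ∀ i ∈ univ, 0 ≤ θ i := by
    intro i _
    fin_cases i
    · exact div_nonneg (mul_nonneg ha hm.le) hD.le
    · exact div_nonneg (mul_nonneg (neg_nonneg.2 hb) hc.le) hD.le
    · exact div_nonneg (mul_pos hc hm).le hD.le
  have hθ1 : ∑ i, θ i = 1 := by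
    simp only [θ, Fin.sum_univ_three, Matrix.cons_val]
    field_simp
    ring
  have hθP : ∑ i, θ i • P i = x := by
    simp only [θ, P, Fin.sum_univ_three, Matrix.cons_val]
    subst hx
    match_scalars <;> field_simp <;> ring
  have hjensen := hN.map_sum_le hθ hθ1 (fun i _ => Set.mem_univ (P i))
  simp only [hθP, θ, P, Fin.sum_univ_three, Matrix.cons_val, smul_eq_mul] at hjensen
  rw [div_mul_eq_mul_div, div_mul_eq_mul_div, div_mul_eq_mul_div, ← add_div, ← add_div,
    le_div_iff₀ hD] at hjensen
  have hcm : 0 < c * m := mul_pos hc hm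
  nlinarith [mul_le_mul_of_nonneg_left hg (mul_nonneg ha hm.le),
    mul_le_mul_of_nonneg_left hg' (mul_nonneg (neg_nonneg.2 hb) hc.le)]

end

/-- An `s`-stage multi-derivative IMEX Runge--Kutta method in Shu--Osher form
with nonnegative coefficients `rᵢ, p_{ij}, w_{ij}, d_{ii}` and nonpositive `ḋ_{ii}` is SSP
under the time-step restriction `0 < Δt ≤ r·Δt_FE` coming only from the explicit operator `F`. -/
theorem SSP_multiderivative_IMEX_RK
    {V : Type*} [AddCommGroup V] [Module ℝ V]
    (N : V → ℝ)
    (hN : ∀ x y : V, ∀ θ : ℝ, 0 ≤ θ → θ ≤ 1 →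
      N (θ • x + (1 - θ) • y) ≤ θ * N x + (1 - θ) * N y)
    (F G Gdot : V → V) (ΔtFE k kdot : ℝ)
    (hΔtFE : 0 < ΔtFE) (hk : 0 < k) (hkdot : 0 < kdot)
    (hFEF : ∀ u : V, ∀ h : ℝ, 0 ≤ h → h ≤ ΔtFE → N (u + h • F u) ≤ N u)
    (hFEG : ∀ u : V, ∀ h : ℝ, 0 ≤ h → h ≤ k * ΔtFE → N (u + h • G u) ≤ N u)
    (hBD : ∀ u : V, ∀ h : ℝ, 0 ≤ h → h ^ 2 ≤ kdot * ΔtFE ^ 2 →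
      N (u - (h ^ 2) • Gdot u) ≤ N u)
    (r : ℝ) (hrpos : 0 < r)
    (s : ℕ) (p w : Fin (s + 1) → Fin (s + 1) → ℝ)
    (d ddot rv : Fin (s + 1) → ℝ)
    (hrv : ∀ i, rv i = 1 - ∑ j ∈ Finset.univ.filter (fun j => j < i), (p i j + w i j))
    (hrvnonneg : ∀ i, 0 ≤ rv i) (hp : ∀ i j, 0 ≤ p i j) (hw : ∀ i j, 0 ≤ w i j)
    (hd : ∀ i, 0 ≤ d i) (hddot : ∀ i, ddot i ≤ 0)
    (Δt : ℝ) (hΔt1 : 0 < Δt) (hΔt2 : Δt ≤ r * ΔtFE)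
    (un : V) (u : Fin (s + 1) → V)
    (hstage : ∀ i, u i = rv i • un
      + (∑ j ∈ Finset.univ.filter (fun j => j < i), p i j • u j)
      + (∑ j ∈ Finset.univ.filter (fun j => j < i), w i j • (u j + (Δt / r) • F (u j)))
      + (Δt * d i) • G (u i) + (Δt ^ 2 * ddot i) • Gdot (u i)) :
    N (u (Fin.last s)) ≤ N un := by
  have hconv := convexOn_univ_of_forall hN
  have hF : ∀ v, N (v + (Δt / r) • F v) ≤ N v := fun v =>
    hFEF v _ (div_pos hΔt1 hrpos).le ((div_le_iff₀ hrpos).2 (by linarith))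
  have hG : ∀ v, N (v + (k * ΔtFE) • G v) ≤ N v := fun v =>
    hFEG v _ (mul_pos hk hΔtFE).le le_rfl
  have hGdot : ∀ v, N (v - (ΔtFE * √kdot) ^ 2 • Gdot v) ≤ N v := fun v =>
    hBD v _ (by positivity) (by rw [mul_pow, Real.sq_sqrt hkdot.le, mul_comm])
  suffices ∀ i, N (u i) ≤ N un from this _
  intro i
  induction i using WellFoundedLT.induction with
  | _ i ih =>
  refine (hconv.le_of_eq_add_smul_add_smul (mul_pos hk hΔtFE) (by positivity)
    (mul_nonneg hΔt1.le (hd i)) (mul_nonpos_of_nonneg_of_nonpos (sq_nonneg Δt) (hddot i))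
    (hG _) (hGdot _) (hstage i)).trans ?_
  refine ((hconv.convex_le (N un)).smul_add_sum_smul_add_sum_smul_mem (hrvnonneg i)
    (fun j _ => hp i j) (fun j _ => hw i j) (by rw [hrv]; ring) ⟨trivial, le_rfl⟩
    (fun j hj => ⟨trivial, ?_⟩) (fun j hj => ⟨trivial, ?_⟩)).2
  · exact ih j (mem_filter.1 hj).2
  · exact (hF _).trans (ih j (mem_filter.1 hj).2)
end

section
/- Let V = ℝᴺ with componentwise positivity (u > 0 means every component of u is positive). Let T : V → V satisfy: there exists Δt_FE > 0 such that u > 0 implies u + h·T(u) > 0 for all 0 ≤ h ≤ Δt_FE (Property 1). Let Q : V → V satisfy: for all u > 0, all τ ≥ 0, and all v with v = u + τ·Q(v), one has v > 0 (Property 2). Let Q̇ : V → V satisfy Q̇(u) = −C(u)·Q(u) for a function C : V → ℝ with C(u) > 0 for all u (Property 5). Fix ε > 0, r > 0, and coefficients rᵢ ≥ 0, p_{ij} ≥ 0, w_{ij} ≥ 0, d_{ii} ≥ 0, ḋ_{ii} ≤ 0 with rᵢ = 1 − Σ_{j<i}(p_{ij} + w_{ij}). Suppose uⁿ > 0 and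 the stages u⁽¹⁾,…,u⁽ˢ⁾ satisfy u⁽ⁱ⁾ = rᵢ·uⁿ + Σ_{j<i} p_{ij}·u⁽ʲ⁾ + Σ_{j<i} w_{ij}·(u⁽ʲ⁾ + (Δt/r)·T(u⁽ʲ⁾)) + (Δt/ε)·d_{ii}·Q(u⁽ⁱ⁾) + (Δt²/ε²)·ḋ_{ii}·Q̇(u⁽ⁱ⁾) for i = 1,…,s. Then for every 0 < Δt ≤ r·Δt_FE, all stages are positive: u⁽ⁱ⁾ > 0 for every i; in particular u^{n+1} = u⁽ˢ⁾ > 0. -/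
/-!
By Property 5 each stage solves `u⁽ⁱ⁾ = a + τ • Q(u⁽ⁱ⁾)` with
`τ = (Δt/ε) d_{ii} + (Δt²/ε²) (-ḋ_{ii}) C(u⁽ⁱ⁾) ≥ 0`, where `a` collects the explicit part.
By strong induction on `i` the earlier stages are positive, hence so are their forward-Euler
steps with step size `Δt/r ≤ Δt_FE` (Property 1). Then `a` is a convex combination of positive
vectors, thus positive, and Property 2 gives `u⁽ⁱ⁾ > 0`.
-/

open Finset

lemma add_sum_smul_add_sum_smul_pos {ι κ : Type*} (s : Finset ι) {a : ℝ} {b c : ι → ℝ}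
    {x : κ → ℝ} {y z : ι → κ → ℝ} (ha : 0 ≤ a) (hb : ∀ i ∈ s, 0 ≤ b i) (hc : ∀ i ∈ s, 0 ≤ c i)
    (hsum : a + ∑ i ∈ s, (b i + c i) = 1) (hx : ∀ k, 0 < x k) (hy : ∀ i ∈ s, ∀ k, 0 < y i k)
    (hz : ∀ i ∈ s, ∀ k, 0 < z i k) (k : κ) :
    0 < (a • x + ∑ i ∈ s, b i • y i + ∑ i ∈ s, c i • z i) k := by
  simp only [Pi.add_apply, Pi.smul_apply, smul_eq_mul, Finset.sum_apply]
  rw [add_assoc, ← sum_add_distrib]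
  have hterm : ∀ i ∈ s, 0 ≤ b i * y i k + c i * z i k := fun i hi =>
    add_nonneg (mul_nonneg (hb i hi) (hy i hi k).le) (mul_nonneg (hc i hi) (hz i hi k).le)
  rcases ha.lt_or_eq with ha | rfl
  · exact add_pos_of_pos_of_nonneg (mul_pos ha (hx k)) (sum_nonneg hterm)
  · obtain ⟨i, hi, hbc⟩ : ∃ i ∈ s, 0 < b i + c i :=
      exists_lt_of_sum_lt (by rw [sum_const_zero]; linarith)
    rw [zero_mul, zero_add]
    refine sum_pos' hterm ⟨i, hi, ?_⟩
    have hmin := mul_pos hbc (lt_min (hy i hi k) (hz i hi k))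
    linarith [mul_le_mul_of_nonneg_left (min_le_left (y i k) (z i k)) (hb i hi),
      mul_le_mul_of_nonneg_left (min_le_right (y i k) (z i k)) (hc i hi)]

theorem IMEX_multiderivative_positivity_general
    (Nd : ℕ)
    (T Q Qdot : (Fin Nd → ℝ) → (Fin Nd → ℝ))
    (C : (Fin Nd → ℝ) → ℝ) (hC : ∀ u, 0 < C u)
    (hQdot : ∀ u, Qdot u = -C u • Q u)
    (ΔtFE : ℝ)
    (hT : ∀ u : Fin Nd → ℝ, (∀ x, 0 < u x) → ∀ h : ℝ, 0 ≤ h → h ≤ ΔtFE →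
      ∀ x, 0 < (u + h • T u) x)
    (hQ : ∀ u v : Fin Nd → ℝ, (∀ x, 0 < u x) → ∀ τ : ℝ, 0 ≤ τ →
      v = u + τ • Q v → ∀ x, 0 < v x)
    (ε r : ℝ) (hε : 0 < ε) (hrpos : 0 < r)
    (s : ℕ) (p w : Fin (s + 1) → Fin (s + 1) → ℝ)
    (d ddot rv : Fin (s + 1) → ℝ)
    (hrv : ∀ i, rv i = 1 - ∑ j ∈ Finset.univ.filter (fun j => j < i), (p i j + w i j))
    (hrvnonneg : ∀ i, 0 ≤ rv i) (hp : ∀ i j, 0 ≤ p i j) (hw : ∀ i j, 0 ≤ w i j)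
    (hd : ∀ i, 0 ≤ d i) (hddot : ∀ i, ddot i ≤ 0)
    (Δt : ℝ) (hΔt1 : 0 < Δt) (hΔt2 : Δt ≤ r * ΔtFE)
    (un : Fin Nd → ℝ) (hun : ∀ x, 0 < un x)
    (u : Fin (s + 1) → (Fin Nd → ℝ))
    (hstage : ∀ i, u i = rv i • un
      + (∑ j ∈ Finset.univ.filter (fun j => j < i), p i j • u j)
      + (∑ j ∈ Finset.univ.filter (fun j => j < i), w i j • (u j + (Δt / r) • T (u j)))
      + (Δt / ε * d i) • Q (u i) + (Δt ^ 2 / ε ^ 2 * ddot i) • Qdot (u i)) :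
    ∀ i x, 0 < u i x := by
  have hstep : Δt / r ≤ ΔtFE := by rw [div_le_iff₀ hrpos]; linarith
  intro i
  induction i using WellFoundedLT.induction with
  | _ i ih =>
    set τ := Δt / ε * d i + Δt ^ 2 / ε ^ 2 * -ddot i * C (u i)
    have hτ : 0 ≤ τ := add_nonneg (mul_nonneg (by positivity) (hd i))
      (mul_nonneg (mul_nonneg (by positivity) (neg_nonneg.2 (hddot i))) (hC _).le)
    refine hQ (rv i • un + ∑ j ∈ univ.filter (· < i), p i j • u j
      + ∑ j ∈ univ.filter (· < i), w i j • (u j + (Δt / r) • T (u j))) (u i) ?_ τ hτ ?_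
    · exact add_sum_smul_add_sum_smul_pos _ (hrvnonneg i) (fun j _ => hp i j)
        (fun j _ => hw i j) (by linarith [hrv i]) hun (fun j hj => ih j (by simpa using hj))
        (fun j hj => hT _ (ih j (by simpa using hj)) _ (by positivity) hstep)
    · conv_lhs => rw [hstage i]
      rw [hQdot]
      module

/-- Positivity preservation of the multi-derivative IMEX Runge--Kutta scheme
for `u' = T(u) + (1/ε)Q(u)`: under Properties 1, 2, 5 and nonnegativity of the Shu--Osher
coefficients (with `ḋ_{ii} ≤ 0`), all stages are componentwise positive for
`0 < Δt ≤ r·Δt_FE`, for every `ε > 0`. -/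
theorem IMEX_multiderivative_positivity
    (Nd : ℕ)
    (T Q Qdot : (Fin Nd → ℝ) → (Fin Nd → ℝ))
    (C : (Fin Nd → ℝ) → ℝ) (hC : ∀ u, 0 < C u)
    (hQdot : ∀ u, Qdot u = -C u • Q u)
    (ΔtFE : ℝ) (hΔtFE : 0 < ΔtFE)
    (hT : ∀ u : Fin Nd → ℝ, (∀ x, 0 < u x) → ∀ h : ℝ, 0 ≤ h → h ≤ ΔtFE →
      ∀ x, 0 < (u + h • T u) x)
    (hQ : ∀ u v : Fin Nd → ℝ, (∀ x, 0 < u x) → ∀ τ : ℝ, 0 ≤ τ →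
      v = u + τ • Q v → ∀ x, 0 < v x)
    (ε r : ℝ) (hε : 0 < ε) (hrpos : 0 < r)
    (s : ℕ) (p w : Fin (s + 1) → Fin (s + 1) → ℝ)
    (d ddot rv : Fin (s + 1) → ℝ)
    (hrv : ∀ i, rv i = 1 - ∑ j ∈ Finset.univ.filter (fun j => j < i), (p i j + w i j))
    (hrvnonneg : ∀ i, 0 ≤ rv i) (hp : ∀ i j, 0 ≤ p i j) (hw : ∀ i j, 0 ≤ w i j)
    (hd : ∀ i, 0 ≤ d i) (hddot : ∀ i, ddot i ≤ 0)
    (Δt : ℝ) (hΔt1 : 0 < Δt) (hΔt2 : Δt ≤ r * ΔtFE)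
    (un : Fin Nd → ℝ) (hun : ∀ x, 0 < un x)
    (u : Fin (s + 1) → (Fin Nd → ℝ))
    (hstage : ∀ i, u i = rv i • un
      + (∑ j ∈ Finset.univ.filter (fun j => j < i), p i j • u j)
      + (∑ j ∈ Finset.univ.filter (fun j => j < i), w i j • (u j + (Δt / r) • T (u j)))
      + (Δt / ε * d i) • Q (u i) + (Δt ^ 2 / ε ^ 2 * ddot i) • Qdot (u i)) :
    ∀ i x, 0 < u i x :=
  IMEX_multiderivative_positivity_general Nd T Q Qdot C hC hQdot ΔtFE hT hQ ε r hε hrpos s p w d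
    ddot rv hrv hrvnonneg hp hw hd hddot Δt hΔt1 hΔt2 un hun u hstage
end

section
/- (Asymptotic preserving limit.) Let Q, Q̇, T : ℝᴺ → ℝᴺ with T and Q continuous, Q̇(u) = −C(u)·Q(u) for a continuous function C : ℝᴺ → ℝ with C(u) > 0 for all u, let ℛ : ℝᴺ → ℝⁿ be linear with ℛ∘Q = 0, and let E : ℝⁿ → ℝᴺ satisfy: Q(u) = 0 implies u = E(ℛu) (Property 4). Fix Δt > 0, r > 0, uⁿ ∈ ℝᴺ, and scheme coefficients with rᵢ = 1 − Σ_{j<i}(p_{ij} + w_{ij}), d_{ii} ≥ 0, ḋ_{ii} ≤ 0, and d_{ii} + |ḋ_{ii}| > 0 for every i. For each ε > 0 let u⁽ⁱ⁾(ε), i = 1,…,s, be stage values of the multi-derivative IMEX scheme with stiffness parameter ε, and suppose u⁽ⁱ⁾(ε) → ū⁽ⁱ⁾ as ε → 0⁺, for each i. Then Q(ū⁽ⁱ⁾) = 0 for every i, hence ū⁽ⁱ⁾ = E(ω⁽ⁱ⁾) with ω⁽ⁱ⁾ := ℛ(ū⁽ⁱ⁾), and the limit moments satisfy the explicit Runge–Kutta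 relations for the limiting system ω' = ℛ(T(E(ω))): ω⁽ⁱ⁾ = rᵢ·ωⁿ + Σ_{j<i} p_{ij}·ω⁽ʲ⁾ + Σ_{j<i} w_{ij}·(ω⁽ʲ⁾ + (Δt/r)·ℛ(T(E(ω⁽ʲ⁾)))), where ωⁿ = ℛ(uⁿ). -/
/-!
Substituting `Q̇ = -C Q`, the `i`-th stage equation says that `u⁽ⁱ⁾(ε)` minus its explicit part
equals `κ(ε) • Q(u⁽ⁱ⁾(ε))` with stiffness `κ(ε) = (Δt/ε) dᵢᵢ + (Δt/ε)² (-ḋᵢᵢ) C(u⁽ⁱ⁾(ε))`.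
The left side converges, and `κ(ε) → +∞` because `dᵢᵢ` and `-ḋᵢᵢ` are nonnegative and not both
zero while `C(u⁽ⁱ⁾(ε)) → C(ū⁽ⁱ⁾) > 0`; hence `Q(ū⁽ⁱ⁾) = 0`. Applying `ℛ` kills both implicit
terms, so the moments satisfy the explicit relations for every `ε > 0`, and these pass to the
limit, where `T(ū⁽ʲ⁾) = T(E(ω⁽ʲ⁾))`.
-/

open Filter Topology Finset

theorem eq_zero_of_tendsto_smul_of_tendsto_atTop {α E : Type*} [AddCommGroup E] [Module ℝ E]
    [TopologicalSpace E] [ContinuousSMul ℝ E] [T2Space E] {l : Filter α} [l.NeBot]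
    {f : α → ℝ} {g : α → E} {q L : E} (hf : Tendsto f l atTop) (hg : Tendsto g l (𝓝 q))
    (hfg : Tendsto (fun a => f a • g a) l (𝓝 L)) : q = 0 := by
  have hlim : Tendsto (fun a => (f a)⁻¹ • (f a • g a)) l (𝓝 ((0 : ℝ) • L)) :=
    hf.inv_tendsto_atTop.smul hfg
  rw [zero_smul] at hlim
  refine tendsto_nhds_unique hg (hlim.congr' ?_)
  filter_upwards [hf.eventually_gt_atTop 0] with a ha
  exact inv_smul_smul₀ ha.ne' _

theorem tendsto_mul_add_sq_mul_mul_atTop {α : Type*} {l : Filter α} {x c : α → ℝ}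
    {c₀ d e : ℝ} (hx : Tendsto x l atTop) (hc : Tendsto c l (𝓝 c₀)) (hc₀ : 0 < c₀)
    (hd : 0 ≤ d) (he : 0 ≤ e) (hde : 0 < d + e) :
    Tendsto (fun a => x a * d + x a ^ 2 * (e * c a)) l atTop := by
  rcases hd.lt_or_eq with hd | rfl
  · refine tendsto_atTop_add_right_of_le' l 0 (hx.atTop_mul_const hd) ?_
    filter_upwards [hc.eventually (eventually_gt_nhds hc₀)] with a ha
    positivity
  · have hx2 : Tendsto (fun a => x a ^ 2) l atTop := (tendsto_pow_atTop two_ne_zero).comp hx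
    refine tendsto_atTop_add_left_of_le' l 0 ?_
      (hx2.atTop_mul_pos (mul_pos (by linarith) hc₀) (hc.const_mul e))
    simp

section ExplicitStage

variable {V W : Type*} [AddCommGroup V] [Module ℝ V] [AddCommGroup W] [Module ℝ W]
  {m : ℕ} (Δt r : ℝ) (p w : Fin m → Fin m → ℝ) (rv : Fin m → ℝ)

/-- The explicit part of the `i`-th stage, given the earlier stages `v j` and the values
`Fv j` of the non-stiff operator at them. -/
noncomputable def explicitStage (u₀ : V) (v Fv : Fin m → V) (i : Fin m) : V :=
  rv i • u₀ + (∑ j ∈ univ.filter (fun j => j < i), p i j • v j)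
    + (∑ j ∈ univ.filter (fun j => j < i), w i j • (v j + (Δt / r) • Fv j))

theorem map_explicitStage (R : V →ₗ[ℝ] W) (u₀ : V) (v Fv : Fin m → V) (i : Fin m) :
    R (explicitStage Δt r p w rv u₀ v Fv i)
      = explicitStage Δt r p w rv (R u₀) (fun j => R (v j)) (fun j => R (Fv j)) i := by
  simp only [explicitStage, map_add, map_sum, map_smul]

theorem tendsto_explicitStage [TopologicalSpace V] [ContinuousAdd V] [ContinuousSMul ℝ V]
    {α : Type*} {l : Filter α} (u₀ : V) {v Fv : α → Fin m → V} {v₀ Fv₀ : Fin m → V}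
    (hv : ∀ j, Tendsto (fun a => v a j) l (𝓝 (v₀ j)))
    (hFv : ∀ j, Tendsto (fun a => Fv a j) l (𝓝 (Fv₀ j))) (i : Fin m) :
    Tendsto (fun a => explicitStage Δt r p w rv u₀ (v a) (Fv a) i) l
      (𝓝 (explicitStage Δt r p w rv u₀ v₀ Fv₀ i)) :=
  (tendsto_const_nhds.add (tendsto_finsetSum _ fun j _ => (hv j).const_smul _)).add
    (tendsto_finsetSum _ fun j _ => ((hv j).add ((hFv j).const_smul _)).const_smul _)

end ExplicitStage

theorem IMEX_multiderivative_asymptotic_preserving_general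
    (Nd n : ℕ)
    (T Q Qdot : (Fin Nd → ℝ) → (Fin Nd → ℝ))
    (hTcont : Continuous T) (hQcont : Continuous Q)
    (C : (Fin Nd → ℝ) → ℝ) (hCcont : Continuous C) (hCpos : ∀ u, 0 < C u)
    (hQdot : ∀ u, Qdot u = -C u • Q u)
    (R : (Fin Nd → ℝ) →ₗ[ℝ] (Fin n → ℝ)) (hRQ : ∀ u, R (Q u) = 0)
    (E : (Fin n → ℝ) → (Fin Nd → ℝ)) (hE : ∀ u, Q u = 0 → u = E (R u))
    (Δt r : ℝ) (hΔt : 0 < Δt)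
    (s : ℕ) (p w : Fin (s + 1) → Fin (s + 1) → ℝ)
    (d ddot rv : Fin (s + 1) → ℝ)
    (hd : ∀ i, 0 ≤ d i) (hddot : ∀ i, ddot i ≤ 0)
    (hdd : ∀ i, 0 < d i + |ddot i|)
    (un : Fin Nd → ℝ)
    (u : ℝ → Fin (s + 1) → (Fin Nd → ℝ))
    (hstage : ∀ ε : ℝ, 0 < ε → ∀ i, u ε i = rv i • un
      + (∑ j ∈ Finset.univ.filter (fun j => j < i), p i j • u ε j)
      + (∑ j ∈ Finset.univ.filter (fun j => j < i),
          w i j • (u ε j + (Δt / r) • T (u ε j)))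
      + (Δt / ε * d i) • Q (u ε i) + (Δt ^ 2 / ε ^ 2 * ddot i) • Qdot (u ε i))
    (ubar : Fin (s + 1) → (Fin Nd → ℝ))
    (hlim : ∀ i, Filter.Tendsto (fun ε => u ε i)
      (nhdsWithin 0 (Set.Ioi 0)) (nhds (ubar i))) :
    (∀ i, Q (ubar i) = 0) ∧
    (∀ i, ubar i = E (R (ubar i))) ∧
    (∀ i, R (ubar i) = rv i • R un
      + (∑ j ∈ Finset.univ.filter (fun j => j < i), p i j • R (ubar j))
      + (∑ j ∈ Finset.univ.filter (fun j => j < i),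
          w i j • (R (ubar j) + (Δt / r) • R (T (E (R (ubar j))))))) := by
  have hT j := (hTcont.tendsto _).comp (hlim j)
  have hR {f : ℝ → Fin Nd → ℝ} {a} (hf : Tendsto f (𝓝[>] 0) (𝓝 a)) :=
    (R.continuous_of_finiteDimensional.tendsto a).comp hf
  have hequilibrium i : Q (ubar i) = 0 := by
    have hstiff : Tendsto (fun ε => Δt / ε) (𝓝[>] 0) atTop := by
      simpa only [div_eq_mul_inv] using tendsto_inv_nhdsGT_zero.const_mul_atTop hΔt
    refine eq_zero_of_tendsto_smul_of_tendsto_atTop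
      (tendsto_mul_add_sq_mul_mul_atTop hstiff ((hCcont.tendsto _).comp (hlim i)) (hCpos _)
        (hd i) (neg_nonneg.2 (hddot i)) (by simpa [abs_of_nonpos (hddot i)] using hdd i))
      ((hQcont.tendsto _).comp (hlim i))
      (((hlim i).sub (tendsto_explicitStage Δt r p w rv un hlim hT i)).congr' ?_)
    filter_upwards [self_mem_nhdsWithin] with ε (hε : 0 < ε)
    conv_lhs => rw [hstage ε hε i, hQdot]
    simp only [explicitStage, Function.comp_apply]
    module
  have hubar i := hE _ (hequilibrium i)
  refine ⟨hequilibrium, hubar, fun i => ?_⟩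
  have hmoments : ∀ᶠ ε in 𝓝[>] 0, R (u ε i)
      = explicitStage Δt r p w rv (R un) (fun j => R (u ε j)) (fun j => R (T (u ε j))) i := by
    filter_upwards [self_mem_nhdsWithin] with ε (hε : 0 < ε)
    rw [hstage ε hε i, ← map_explicitStage]
    simp only [explicitStage, hQdot, map_add, map_smul, hRQ, smul_zero, add_zero]
  have hlimit := tendsto_nhds_unique ((hR (hlim i)).congr' hmoments)
    (tendsto_explicitStage Δt r p w rv (R un) (fun j => hR (hlim j)) (fun j => hR (hT j)) i)
  simp only [← hubar] at hlimit ⊢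
  exact hlimit

/-- Asymptotic preserving limit: if, for each `ε > 0`, the stages of the
multi-derivative IMEX scheme converge as `ε → 0⁺` to limits `ū⁽ⁱ⁾`, then the limits are
equilibria (`Q(ū⁽ⁱ⁾) = 0`, so `ū⁽ⁱ⁾ = E(ℛū⁽ⁱ⁾)`) and the limit moments satisfy the
explicit Runge--Kutta relations for the limiting system `ω' = ℛ(T(E(ω)))`. -/
theorem IMEX_multiderivative_asymptotic_preserving
    (Nd n : ℕ)
    (T Q Qdot : (Fin Nd → ℝ) → (Fin Nd → ℝ))
    (hTcont : Continuous T) (hQcont : Continuous Q)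
    (C : (Fin Nd → ℝ) → ℝ) (hCcont : Continuous C) (hCpos : ∀ u, 0 < C u)
    (hQdot : ∀ u, Qdot u = -C u • Q u)
    (R : (Fin Nd → ℝ) →ₗ[ℝ] (Fin n → ℝ)) (hRQ : ∀ u, R (Q u) = 0)
    (E : (Fin n → ℝ) → (Fin Nd → ℝ)) (hE : ∀ u, Q u = 0 → u = E (R u))
    (Δt r : ℝ) (hΔt : 0 < Δt) (hrpos : 0 < r)
    (s : ℕ) (p w : Fin (s + 1) → Fin (s + 1) → ℝ)
    (d ddot rv : Fin (s + 1) → ℝ)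
    (hrv : ∀ i, rv i = 1 - ∑ j ∈ Finset.univ.filter (fun j => j < i), (p i j + w i j))
    (hd : ∀ i, 0 ≤ d i) (hddot : ∀ i, ddot i ≤ 0)
    (hdd : ∀ i, 0 < d i + |ddot i|)
    (un : Fin Nd → ℝ)
    (u : ℝ → Fin (s + 1) → (Fin Nd → ℝ))
    (hstage : ∀ ε : ℝ, 0 < ε → ∀ i, u ε i = rv i • un
      + (∑ j ∈ Finset.univ.filter (fun j => j < i), p i j • u ε j)
      + (∑ j ∈ Finset.univ.filter (fun j => j < i),
          w i j • (u ε j + (Δt / r) • T (u ε j)))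
      + (Δt / ε * d i) • Q (u ε i) + (Δt ^ 2 / ε ^ 2 * ddot i) • Qdot (u ε i))
    (ubar : Fin (s + 1) → (Fin Nd → ℝ))
    (hlim : ∀ i, Filter.Tendsto (fun ε => u ε i)
      (nhdsWithin 0 (Set.Ioi 0)) (nhds (ubar i))) :
    (∀ i, Q (ubar i) = 0) ∧
    (∀ i, ubar i = E (R (ubar i))) ∧
    (∀ i, R (ubar i) = rv i • R un
      + (∑ j ∈ Finset.univ.filter (fun j => j < i), p i j • R (ubar j))
      + (∑ j ∈ Finset.univ.filter (fun j => j < i),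
          w i j • (R (ubar j) + (Δt / r) • R (T (E (R (ubar j))))))) :=
  IMEX_multiderivative_asymptotic_preserving_general Nd n T Q Qdot hTcont hQcont C hCcont hCpos
    hQdot R hRQ E hE Δt r hΔt s p w d ddot rv hd hddot hdd un u hstage ubar hlim
end

section
/- Let f, g : ℝ → ℝ be differentiable, and define Q : ℝ² → ℝ² by Q(u₁, u₂) = (0, f(u₁)·(g(u₁) − u₂)). Then Q is differentiable and its Fréchet derivative satisfies Q'(u)(Q(u)) = −f(u₁)·Q(u) for every u = (u₁, u₂) ∈ ℝ². -/
/-!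
`Q u = (0, w)` points in the `u₂`-direction, along which `Q` is affine with slope
`(0, -f u₁)`. Hence `Q'(u)(Q u) = w • (0, -f u₁) = -f u₁ • Q u`.
-/

open ContinuousLinearMap

theorem fderiv_apply_zero_prodMk {𝕜 E F G : Type*} [NontriviallyNormedField 𝕜]
    [NormedAddCommGroup E] [NormedSpace 𝕜 E] [NormedAddCommGroup F] [NormedSpace 𝕜 F]
    [NormedAddCommGroup G] [NormedSpace 𝕜 G] {φ : E × F → G} {x : E} {y : F}
    (hφ : DifferentiableAt 𝕜 φ (x, y)) (w : F) :
    fderiv 𝕜 φ (x, y) (0, w) = fderiv 𝕜 (fun y' => φ (x, y')) y w := by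
  have h : HasFDerivAt (fun y' => φ (x, y')) ((fderiv 𝕜 φ (x, y)).comp (inr 𝕜 E F)) y :=
    hφ.hasFDerivAt.comp y (hasFDerivAt_prodMk_right x y)
  rw [h.fderiv]
  rfl

theorem hasDerivAt_zero_prodMk_mul_sub {𝕜 : Type*} [NontriviallyNormedField 𝕜] (c a y : 𝕜) :
    HasDerivAt (fun y => ((0 : 𝕜), c * (a - y))) (0, -c) y := by
  simpa using (hasDerivAt_const y 0).prodMk (((hasDerivAt_id y).const_sub a).const_mul c)

/-- for the ODE model relaxation operator
`Q(u₁, u₂) = (0, f(u₁)·(g(u₁) − u₂))` with `f, g` differentiable, `Q` is differentiable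
and its Fréchet derivative satisfies `Q'(u)(Q(u)) = −f(u₁)·Q(u)`. -/
theorem ODE_model_backward_derivative
    (f g : ℝ → ℝ) (hf : Differentiable ℝ f) (hg : Differentiable ℝ g)
    (Q : ℝ × ℝ → ℝ × ℝ)
    (hQ : ∀ u : ℝ × ℝ, Q u = (0, f u.1 * (g u.1 - u.2))) :
    Differentiable ℝ Q ∧ ∀ u : ℝ × ℝ, fderiv ℝ Q u (Q u) = (-f u.1) • Q u := by
  obtain rfl : Q = fun u => (0, f u.1 * (g u.1 - u.2)) := funext hQ
  have hQ_diff : Differentiable ℝ fun u : ℝ × ℝ => ((0 : ℝ), f u.1 * (g u.1 - u.2)) := by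
    fun_prop
  refine ⟨hQ_diff, fun ⟨x, y⟩ => ?_⟩
  rw [fderiv_apply_zero_prodMk (hQ_diff (x, y)),
    (hasDerivAt_zero_prodMk_mul_sub (f x) (g x) y).hasFDerivAt.fderiv]
  simp [mul_comm]
end

section
/- Define Q : ℝ³ → ℝ³ by Q(f₊, f₀, f₋) = (q, −q, q) where q = f₀² − f₊·f₋. Then Q is differentiable and its Fréchet derivative satisfies Q'(f)(Q(f)) = −ρ·Q(f) for every f = (f₊, f₀, f₋) ∈ ℝ³, where ρ := f₊ + 2f₀ + f₋. -/
/-!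
The Broadwell operator is `Q f = q f • (1, -1, 1)` with the scalar collision term
`q f = f₀² - f₊ f₋`. For any map of the form `f ↦ q f • e`, the derivative in the direction
`Q f` is `(q'(f) e) • Q f`, and here `q'(f) (1, -1, 1) = -2 f₀ - f₋ - f₊ = -ρ`.
-/

section ScalarTimesConstant

variable {𝕜 E : Type*} [NontriviallyNormedField 𝕜] [NormedAddCommGroup E] [NormedSpace 𝕜 E]

theorem fderiv_smul_const_apply_self {q : E → 𝕜} {x : E} (hq : DifferentiableAt 𝕜 q x) (e : E) :
    fderiv 𝕜 (fun y => q y • e) x (q x • e) = fderiv 𝕜 q x e • q x • e := by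
  rw [fderiv_smul_const hq, ContinuousLinearMap.smulRight_apply, map_smul, smul_eq_mul,
    mul_comm, mul_smul]

end ScalarTimesConstant

def broadwellCollision (f : ℝ × ℝ × ℝ) : ℝ := f.2.1 ^ 2 - f.1 * f.2.2

theorem differentiable_broadwellCollision : Differentiable ℝ broadwellCollision := by
  unfold broadwellCollision
  fun_prop

theorem fderiv_broadwellCollision_apply (f v : ℝ × ℝ × ℝ) :
    fderiv ℝ broadwellCollision f v = 2 * f.2.1 * v.2.1 - (f.1 * v.2.2 + v.1 * f.2.2) := by
  have hp : HasFDerivAt (fun g : ℝ × ℝ × ℝ => g.1) (ContinuousLinearMap.fst ℝ ℝ (ℝ × ℝ)) f :=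
    hasFDerivAt_fst
  have hz : HasFDerivAt (fun g : ℝ × ℝ × ℝ => g.2.1)
      ((ContinuousLinearMap.fst ℝ ℝ ℝ).comp (ContinuousLinearMap.snd ℝ ℝ (ℝ × ℝ))) f :=
    hasFDerivAt_fst.comp f hasFDerivAt_snd
  have hm : HasFDerivAt (fun g : ℝ × ℝ × ℝ => g.2.2)
      ((ContinuousLinearMap.snd ℝ ℝ ℝ).comp (ContinuousLinearMap.snd ℝ ℝ (ℝ × ℝ))) f :=
    hasFDerivAt_snd.comp f hasFDerivAt_snd
  have h_eq : broadwellCollision = fun g => g.2.1 * g.2.1 - g.1 * g.2.2 := by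
    funext g
    rw [broadwellCollision, pow_two]
  rw [h_eq, ((hz.fun_mul hz).fun_sub (hp.fun_mul hm)).fderiv]
  simp only [sub_apply, add_apply, smul_apply, ContinuousLinearMap.comp_apply, ContinuousLinearMap.coe_snd',
    ContinuousLinearMap.coe_fst', smul_eq_mul]
  ring

theorem fderiv_broadwellCollision_apply_one_neg_one_one (f : ℝ × ℝ × ℝ) :
    fderiv ℝ broadwellCollision f (1, -1, 1) = -(f.1 + 2 * f.2.1 + f.2.2) := by
  rw [fderiv_broadwellCollision_apply]
  ring

/-- for the Broadwell collision operator
`Q(f₊, f₀, f₋) = (q, −q, q)` with `q = f₀² − f₊·f₋`, `Q` is differentiable and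
`Q'(f)(Q(f)) = −ρ·Q(f)` where `ρ = f₊ + 2f₀ + f₋`. -/
theorem Broadwell_backward_derivative
    (Q : ℝ × ℝ × ℝ → ℝ × ℝ × ℝ)
    (hQ : ∀ f : ℝ × ℝ × ℝ, Q f =
      (f.2.1 ^ 2 - f.1 * f.2.2, -(f.2.1 ^ 2 - f.1 * f.2.2), f.2.1 ^ 2 - f.1 * f.2.2)) :
    Differentiable ℝ Q ∧
    ∀ f : ℝ × ℝ × ℝ, fderiv ℝ Q f (Q f) = (-(f.1 + 2 * f.2.1 + f.2.2)) • Q f := by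
  have hQ_eq : Q = fun f => broadwellCollision f • ((1, -1, 1) : ℝ × ℝ × ℝ) := by
    funext f
    simp [hQ f, broadwellCollision]
  subst hQ_eq
  refine ⟨differentiable_broadwellCollision.smul_const _, fun f => ?_⟩
  rw [fderiv_smul_const_apply_self (differentiable_broadwellCollision f),
    fderiv_broadwellCollision_apply_one_neg_one_one]
end
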